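/- arXiv:1811.07527 — 4 statements merged into one kernel-verified Lean document; each statement's English description precedes it below -/
import Mathlib

section
/- Let m, k ∈ ℕ with m, k ≥ 1 and identify ℝ^{m+k} = ℝ^m × ℝ^k, writing points as x = (y, z) with y ∈ ℝ^m, z ∈ ℝ^k. There exists a constant C > 0, depending only on m and k, such that for every measurable u : ℝ^{m+k} → ℂ with ‖u‖_{B*(ℝ^{m+k})} < ∞ and every measurable φ : ℝ^m → ℂ with M := ( ∫_{ℝ^m} (1+|y|²) |φ(y)|² dy )^{1/2} < ∞, the function v(z) := ∫_{ℝ^m} u(y, z) \overline{φ(y)} dy is defined by an absolutely convergent integral for almost every z ∈ ℝ^k, and satisfies ‖v‖_{B*(ℝ^k)} ≤ C · M · ‖u‖_{B*(ℝ^{m+k})}. -/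
/-! By Cauchy–Schwarz with the weight `1 + |y|²`,
`|v(z)|² ≤ M² ∫ (1 + |y|²)⁻¹ |u(y, z)|² dy`. The `B*` norm controls `u` on dyadic balls,
`∫_{|x| < 2^l} |u|² ≤ 2^(l+1) ‖u‖²_{B*}`. Splitting the weight dyadically,
`(1 + |y|²)⁻¹ ≤ 4 ∑_i 4^(-i) 1_{|y| < 2^i}`, and using that `|y| < 2^i`, `|z| < 2^j` force
`|(y, z)| < 2^(i+j+1)`, the integral of the right-hand side over `|z| < 2^j` is at most
`∑_i 4^(1-i) 2^(i+j+2) ‖u‖²_{B*} = 32 · 2^j ‖u‖²_{B*}`. Since `Ω_j ⊆ {|z| < 2^j}`, this is the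
`B*` bound for `v` with `C = √32`. -/

open MeasureTheory Metric Filter
open scoped ENNReal RealInnerProductSpace Topology

noncomputable section

/-- Euclidean space `ℝ^n`. -/
abbrev Euc (n : ℕ) := EuclideanSpace ℝ (Fin n)

/-- The Agmon–Hörmander dyadic shells: `Ω_0 = {|x| < 1}`,
`Ω_j = {2^(j-1) < |x| < 2^j}` for `j ≥ 1`. -/
def AHshell (n : ℕ) (j : ℕ) : Set (Euc n) :=
  if j = 0 then Metric.ball 0 1 else {x | (2:ℝ) ^ (j - 1) < ‖x‖ ∧ ‖x‖ < (2:ℝ) ^ j}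

/-- The Agmon–Hörmander norm `‖u‖_{B*} = sup_j ρ_j^{-1/2} ‖u‖_{L²(Ω_j)}`,
valued in `ℝ≥0∞`. -/
def BStarNorm (n : ℕ) (u : Euc n → ℂ) : ℝ≥0∞ :=
  ⨆ j : ℕ, (2 : ℝ≥0∞) ^ (-(j : ℝ) / 2) * eLpNorm u 2 (volume.restrict (AHshell n j))

/-- Concatenation `ℝ^m × ℝ^k → ℝ^{m+k}`, `(y,z) ↦ x = (y,z)`. -/
def join (m k : ℕ) (y : Euc m) (z : Euc k) : Euc (m + k) :=
  (WithLp.equiv 2 (Fin (m + k) → ℝ)).symm (Fin.append (fun i => y i) (fun i => z i))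

open Set

lemma eLpNorm_two_sq {α E : Type*} [MeasurableSpace α] [NormedAddCommGroup E]
    (f : α → E) (μ : Measure α) : eLpNorm f 2 μ ^ 2 = ∫⁻ x, ‖f x‖ₑ ^ 2 ∂μ := by
  simpa using eLpNorm_nnreal_pow_eq_lintegral (f := f) (μ := μ) (p := 2) two_ne_zero

lemma rpow_inv_two_sq (a : ℝ≥0∞) : (a ^ (2⁻¹ : ℝ)) ^ 2 = a := by
  rw [← ENNReal.rpow_natCast, ← ENNReal.rpow_mul]
  norm_num

lemma lintegral_mul_sq_le_weighted {α : Type*} [MeasurableSpace α] {μ : Measure α}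
    {f g w : α → ℝ≥0∞} (hf : AEMeasurable f μ) (hg : AEMeasurable g μ) (hw : Measurable w)
    (hw0 : ∀ x, w x ≠ 0) (hwt : ∀ x, w x ≠ ⊤) :
    (∫⁻ x, f x * g x ∂μ) ^ 2 ≤ (∫⁻ x, (w x)⁻¹ * f x ^ 2 ∂μ) * ∫⁻ x, w x * g x ^ 2 ∂μ := by
  have hsplit : ∀ x, f x * g x = ((w x)⁻¹ ^ (2⁻¹ : ℝ) * f x) * (w x ^ (2⁻¹ : ℝ) * g x) :=
    fun x => by
      rw [mul_mul_mul_comm, ← ENNReal.mul_rpow_of_nonneg _ _ (by norm_num),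
        ENNReal.inv_mul_cancel (hw0 x) (hwt x), ENNReal.one_rpow, one_mul]
  have holder := ENNReal.lintegral_mul_le_Lp_mul_Lq μ Real.HolderConjugate.two_two
    (f := fun x => (w x)⁻¹ ^ (2⁻¹ : ℝ) * f x) (g := fun x => w x ^ (2⁻¹ : ℝ) * g x)
    ((hw.inv.pow_const _).aemeasurable.mul hf) ((hw.pow_const _).aemeasurable.mul hg)
  simp only [Pi.mul_apply, ENNReal.mul_rpow_of_nonneg _ _ zero_le_two, ENNReal.rpow_two,
    rpow_inv_two_sq] at holder
  simp_rw [hsplit]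
  calc _ ≤ ((∫⁻ x, (w x)⁻¹ * f x ^ 2 ∂μ) ^ (1 / 2 : ℝ) *
        (∫⁻ x, w x * g x ^ 2 ∂μ) ^ (1 / 2 : ℝ)) ^ 2 := by gcongr
    _ = _ := by rw [mul_pow, one_div, rpow_inv_two_sq, rpow_inv_two_sq]

lemma inv_one_add_sq_le_tsum {E : Type*} [SeminormedAddCommGroup E] (y : E) :
    (ENNReal.ofReal (1 + ‖y‖ ^ 2))⁻¹ ≤
      ∑' i : ℕ, (ball (0 : E) (2 ^ i)).indicator (fun _ => 4 * (2⁻¹ ^ i) ^ 2) y := by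
  rcases lt_or_ge ‖y‖ 1 with hy | hy
  · refine le_trans ?_ (ENNReal.le_tsum 0)
    rw [indicator_of_mem (by simpa using hy)]
    calc (ENNReal.ofReal (1 + ‖y‖ ^ 2))⁻¹ ≤ 1 :=
          ENNReal.inv_le_one.2 (ENNReal.one_le_ofReal.2 (by nlinarith [sq_nonneg ‖y‖]))
      _ ≤ 4 * (2⁻¹ ^ 0) ^ 2 := by norm_num
  · obtain ⟨n, hn, hn1⟩ := exists_nat_pow_near hy one_lt_two
    refine le_trans ?_ (ENNReal.le_tsum (n + 1))
    rw [indicator_of_mem (mem_ball_zero_iff.2 hn1)]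
    have hcoef : 4 * ((2 : ℝ≥0∞)⁻¹ ^ (n + 1)) ^ 2 = (ENNReal.ofReal ((2 ^ n) ^ 2))⁻¹ := by
      calc 4 * ((2 : ℝ≥0∞)⁻¹ ^ (n + 1)) ^ 2 = (2⁻¹ ^ n) ^ 2 * (2 * 2⁻¹) ^ 2 := by ring
        _ = (2⁻¹ ^ n) ^ 2 := by
          rw [ENNReal.mul_inv_cancel two_ne_zero ENNReal.ofNat_ne_top, one_pow, mul_one]
        _ = _ := by
          rw [ENNReal.ofReal_pow (by positivity), ENNReal.ofReal_pow zero_le_two,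
            ENNReal.ofReal_ofNat, ENNReal.inv_pow, ENNReal.inv_pow]
    rw [hcoef]
    exact ENNReal.inv_le_inv.2 (ENNReal.ofReal_le_ofReal
      (by nlinarith [pow_le_pow_left₀ (by positivity) hn 2]))

lemma tsum_four_mul_inv_two_pow_sq_mul_two_pow (j : ℕ) :
    ∑' i : ℕ, 4 * ((2 : ℝ≥0∞)⁻¹ ^ i) ^ 2 * 2 ^ (i + j + 2) = 32 * 2 ^ j := by
  have hterm : ∀ i : ℕ, 4 * ((2 : ℝ≥0∞)⁻¹ ^ i) ^ 2 * 2 ^ (i + j + 2) = 16 * 2 ^ j * 2⁻¹ ^ i :=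
    fun i => calc
      4 * ((2 : ℝ≥0∞)⁻¹ ^ i) ^ 2 * 2 ^ (i + j + 2) = 16 * 2 ^ j * 2⁻¹ ^ i * (2⁻¹ * 2) ^ i := by
        ring
      _ = 16 * 2 ^ j * 2⁻¹ ^ i := by
        rw [ENNReal.inv_mul_cancel two_ne_zero ENNReal.ofNat_ne_top, one_pow, mul_one]
  simp_rw [hterm, ENNReal.tsum_mul_left, ENNReal.tsum_geometric_two]
  ring

lemma ae_lt_top_of_setLIntegral_ball_two_pow_ne_top {E : Type*} [NormedAddCommGroup E]
    [MeasurableSpace E] {μ : Measure E} {H : E → ℝ≥0∞} (hH : Measurable H)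
    (h : ∀ j : ℕ, ∫⁻ x in ball 0 (2 ^ j), H x ∂μ ≠ ⊤) : ∀ᵐ x ∂μ, H x < ⊤ := by
  have hball : ∀ j : ℕ, ∀ᵐ x ∂μ, x ∈ ball (0 : E) (2 ^ j) → H x < ⊤ :=
    fun j => ae_imp_of_ae_restrict (ae_lt_top hH (h j))
  filter_upwards [ae_all_iff.2 hball] with x hx
  obtain ⟨j, hj⟩ := pow_unbounded_of_one_lt ‖x‖ one_lt_two
  exact hx j (mem_ball_zero_iff.2 hj)

lemma BStarNorm_le_iff {n : ℕ} {u : Euc n → ℂ} {A : ℝ≥0∞} :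
    BStarNorm n u ≤ A ↔ ∀ j : ℕ, ∫⁻ x in AHshell n j, ‖u x‖ₑ ^ 2 ≤ 2 ^ j * A ^ 2 := by
  refine iSup_le_iff.trans (forall_congr' fun j => ?_)
  have h2j : ((2 : ℝ≥0∞) ^ (-(j : ℝ) / 2)) ^ 2 = (2 ^ j)⁻¹ := by
    rw [← ENNReal.rpow_natCast, ← ENNReal.rpow_mul, ← ENNReal.rpow_natCast, ← ENNReal.rpow_neg]
    norm_num
  rw [← ENNReal.pow_le_pow_left_iff two_ne_zero, mul_pow, eLpNorm_two_sq, h2j,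
    ENNReal.inv_mul_le_iff (by positivity) (by simp)]

lemma AHshell_subset_ball (n j : ℕ) : AHshell n j ⊆ ball 0 (2 ^ j) := by
  intro x hx
  unfold AHshell at hx
  split_ifs at hx with hj
  · simpa [hj] using hx
  · exact mem_ball_zero_iff.2 hx.2

lemma lintegral_ball_two_pow_le {n : ℕ} (u : Euc n → ℂ) (l : ℕ) :
    ∫⁻ x in ball 0 (2 ^ l), ‖u x‖ₑ ^ 2 ≤ 2 ^ (l + 1) * BStarNorm n u ^ 2 := by
  have hshell := BStarNorm_le_iff.1 (le_refl (BStarNorm n u))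
  induction l with
  | zero => simpa [AHshell] using (hshell 0).trans (by gcongr; norm_num)
  | succ l ih =>
    have hcover : ball (0 : Euc n) (2 ^ (l + 1)) ⊆
        (ball 0 (2 ^ l) ∪ sphere 0 (2 ^ l)) ∪ AHshell n (l + 1) := by
      intro x hx
      rw [mem_ball_zero_iff] at hx
      rcases lt_trichotomy ‖x‖ (2 ^ l) with h | h | h
      · exact Or.inl (Or.inl (mem_ball_zero_iff.2 h))
      · exact Or.inl (Or.inr (mem_sphere_zero_iff_norm.2 h))
      · exact Or.inr (by simpa [AHshell] using ⟨h, hx⟩)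
    calc ∫⁻ x in ball 0 (2 ^ (l + 1)), ‖u x‖ₑ ^ 2
        ≤ (∫⁻ x in ball 0 (2 ^ l), ‖u x‖ₑ ^ 2) + (∫⁻ x in sphere 0 (2 ^ l), ‖u x‖ₑ ^ 2)
          + ∫⁻ x in AHshell n (l + 1), ‖u x‖ₑ ^ 2 :=
        (lintegral_mono_set hcover).trans <|
          (lintegral_union_le _ _ _).trans (add_le_add_left (lintegral_union_le _ _ _) _)
      _ ≤ 2 ^ (l + 1) * BStarNorm n u ^ 2 + 0 + 2 ^ (l + 1) * BStarNorm n u ^ 2 := by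
        refine add_le_add (add_le_add ih (le_of_eq ?_)) (hshell _)
        exact setLIntegral_measure_zero _ _ (Measure.addHaar_sphere_of_ne_zero _ _ (by positivity))
      _ = 2 ^ (l + 1 + 1) * BStarNorm n u ^ 2 := by ring

lemma join_castAdd (m k : ℕ) (y : Euc m) (z : Euc k) (i : Fin m) :
    join m k y z (Fin.castAdd k i) = y i :=
  Fin.append_left _ _ i

lemma join_natAdd (m k : ℕ) (y : Euc m) (z : Euc k) (i : Fin k) :
    join m k y z (Fin.natAdd m i) = z i :=
  Fin.append_right _ _ i

lemma measurePreserving_join (m k : ℕ) :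
    MeasurePreserving (fun p : Euc m × Euc k => join m k p.1 p.2) (volume.prod volume) volume := by
  have h := (EuclideanSpace.volume_preserving_symm_measurableEquiv_toLp (Fin (m + k))).symm.comp
    ((volume_measurePreserving_piCongrLeft (fun _ => ℝ) finSumFinEquiv).comp
      ((volume_measurePreserving_sumPiEquivProdPi_symm fun _ : Fin m ⊕ Fin k => ℝ).comp
        ((EuclideanSpace.volume_preserving_symm_measurableEquiv_toLp (Fin m)).prod
          (EuclideanSpace.volume_preserving_symm_measurableEquiv_toLp (Fin k)))))
  convert h using 1
  case e'_4 => rfl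
  funext p
  ext i
  refine Fin.addCases (fun l => ?_) (fun r => ?_) i
  · simp only [join_castAdd, Function.comp_apply, MeasurableEquiv.symm_symm,
      MeasurableEquiv.toLp_apply]
    rw [← finSumFinEquiv_apply_left, MeasurableEquiv.piCongrLeft_apply_apply]
    rfl
  · simp only [join_natAdd, Function.comp_apply, MeasurableEquiv.symm_symm,
      MeasurableEquiv.toLp_apply]
    rw [← finSumFinEquiv_apply_right, MeasurableEquiv.piCongrLeft_apply_apply]
    rfl

lemma norm_join_sq (m k : ℕ) (y : Euc m) (z : Euc k) :
    ‖join m k y z‖ ^ 2 = ‖y‖ ^ 2 + ‖z‖ ^ 2 := by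
  simp only [EuclideanSpace.norm_sq_eq, Fin.sum_univ_add, join_castAdd, join_natAdd]

lemma join_mem_ball {m k : ℕ} {y : Euc m} {z : Euc k} {i j : ℕ}
    (hy : y ∈ ball 0 (2 ^ i)) (hz : z ∈ ball 0 (2 ^ j)) :
    join m k y z ∈ ball (0 : Euc (m + k)) (2 ^ (i + j + 1)) := by
  rw [mem_ball_zero_iff] at *
  have hy2 : ‖y‖ ^ 2 < (2 ^ i) ^ 2 := pow_lt_pow_left₀ hy (norm_nonneg _) two_ne_zero
  have hz2 : ‖z‖ ^ 2 < (2 ^ j) ^ 2 := pow_lt_pow_left₀ hz (norm_nonneg _) two_ne_zero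
  have hi : (1 : ℝ) ≤ (2 ^ i) ^ 2 := one_le_pow₀ (one_le_pow₀ one_le_two)
  have hj : (1 : ℝ) ≤ (2 ^ j) ^ 2 := one_le_pow₀ (one_le_pow₀ one_le_two)
  have h4 : ((2 : ℝ) ^ (i + j + 1)) ^ 2 = 4 * (2 ^ i) ^ 2 * (2 ^ j) ^ 2 := by ring
  refine lt_of_pow_lt_pow_left₀ 2 (by positivity) ?_
  rw [norm_join_sq, h4]
  nlinarith

lemma lintegral_lintegral_join {m k : ℕ} {F : Euc (m + k) → ℝ≥0∞} (hF : Measurable F) :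
    ∫⁻ z, ∫⁻ y, F (join m k y z) = ∫⁻ x, F x := by
  have hFj := hF.comp (measurePreserving_join m k).measurable
  calc ∫⁻ z, ∫⁻ y, F (join m k y z)
      = ∫⁻ p, F (join m k p.1 p.2) ∂(volume.prod volume) :=
        (lintegral_prod_symm _ hFj.aemeasurable).symm
    _ = ∫⁻ x, F x := (measurePreserving_join m k).lintegral_comp hF

section Pairing

variable {m k : ℕ} {u : Euc (m + k) → ℂ}

lemma measurable_comp_join_left (hu : Measurable u) (z : Euc k) :
    Measurable fun y : Euc m => u (join m k y z) :=
  hu.comp ((measurePreserving_join m k).measurable.comp (measurable_id.prodMk measurable_const))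

lemma measurable_enorm_sq_join (hu : Measurable u) :
    Measurable fun p : Euc k × Euc m => ‖u (join m k p.2 p.1)‖ₑ ^ 2 :=
  (hu.comp ((measurePreserving_join m k).measurable.comp measurable_swap)).enorm.pow_const 2

lemma lintegral_ball_lintegral_ball_join_le (hu : Measurable u) (i j : ℕ) :
    ∫⁻ z in ball (0 : Euc k) (2 ^ j), ∫⁻ y in ball (0 : Euc m) (2 ^ i), ‖u (join m k y z)‖ₑ ^ 2
      ≤ 2 ^ (i + j + 2) * BStarNorm (m + k) u ^ 2 := by
  set R : Set (Euc (m + k)) := ball 0 (2 ^ (i + j + 1))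
  have hG : Measurable (R.indicator fun x => ‖u x‖ₑ ^ 2) :=
    (hu.enorm.pow_const 2).indicator measurableSet_ball
  calc _ ≤ ∫⁻ z in ball (0 : Euc k) (2 ^ j), ∫⁻ y in ball (0 : Euc m) (2 ^ i),
          R.indicator (fun x => ‖u x‖ₑ ^ 2) (join m k y z) :=
        setLIntegral_mono' measurableSet_ball fun z hz => setLIntegral_mono' measurableSet_ball
          fun y hy => (indicator_of_mem (join_mem_ball hy hz) _).ge
    _ ≤ ∫⁻ z, ∫⁻ y, R.indicator (fun x => ‖u x‖ₑ ^ 2) (join m k y z) :=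
        (setLIntegral_le_lintegral _ _).trans (lintegral_mono fun z => setLIntegral_le_lintegral _ _)
    _ = ∫⁻ x in R, ‖u x‖ₑ ^ 2 :=
        (lintegral_lintegral_join hG).trans (lintegral_indicator measurableSet_ball _)
    _ ≤ 2 ^ (i + j + 2) * BStarNorm (m + k) u ^ 2 := lintegral_ball_two_pow_le u _

lemma lintegral_ball_lintegral_weighted_le (hu : Measurable u) (j : ℕ) :
    ∫⁻ z in ball (0 : Euc k) (2 ^ j),
        ∫⁻ y, (ENNReal.ofReal (1 + ‖y‖ ^ 2))⁻¹ * ‖u (join m k y z)‖ₑ ^ 2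
      ≤ 32 * 2 ^ j * BStarNorm (m + k) u ^ 2 := by
  set c : ℕ → ℝ≥0∞ := fun i => 4 * (2⁻¹ ^ i) ^ 2
  have hc : ∀ i, c i ≠ ⊤ := fun i => by simp [c, ENNReal.mul_eq_top]
  have hy_split : ∀ z : Euc k,
      ∫⁻ y, (ENNReal.ofReal (1 + ‖y‖ ^ 2))⁻¹ * ‖u (join m k y z)‖ₑ ^ 2
        ≤ ∑' i, c i * ∫⁻ y in ball 0 (2 ^ i), ‖u (join m k y z)‖ₑ ^ 2 := fun z => by
    have hFz := (measurable_comp_join_left hu z).enorm.pow_const 2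
    calc _ ≤ ∫⁻ y, ∑' i, (ball 0 (2 ^ i)).indicator (fun y => c i * ‖u (join m k y z)‖ₑ ^ 2) y :=
          lintegral_mono fun y => by
            simp_rw [indicator_mul_left]
            rw [ENNReal.tsum_mul_right]
            exact mul_le_mul_left (inv_one_add_sq_le_tsum y) _
      _ = ∑' i, c i * ∫⁻ y in ball 0 (2 ^ i), ‖u (join m k y z)‖ₑ ^ 2 := by
          rw [lintegral_tsum fun i => ((hFz.const_mul _).indicator measurableSet_ball).aemeasurable]
          simp_rw [lintegral_indicator measurableSet_ball, lintegral_const_mul' _ _ (hc _)]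
  calc _ ≤ ∫⁻ z in ball (0 : Euc k) (2 ^ j),
          ∑' i, c i * ∫⁻ y in ball 0 (2 ^ i), ‖u (join m k y z)‖ₑ ^ 2 :=
        lintegral_mono hy_split
    _ = ∑' i, c i * ∫⁻ z in ball (0 : Euc k) (2 ^ j),
          ∫⁻ y in ball (0 : Euc m) (2 ^ i), ‖u (join m k y z)‖ₑ ^ 2 := by
        rw [lintegral_tsum fun i =>
          ((measurable_enorm_sq_join hu).lintegral_prod_right'.const_mul _).aemeasurable]
        simp_rw [lintegral_const_mul' _ _ (hc _)]
    _ ≤ ∑' i, c i * (2 ^ (i + j + 2) * BStarNorm (m + k) u ^ 2) :=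
        ENNReal.tsum_le_tsum fun i =>
          mul_le_mul_right (lintegral_ball_lintegral_ball_join_le hu i j) _
    _ = 32 * 2 ^ j * BStarNorm (m + k) u ^ 2 := by
        simp_rw [← mul_assoc, ENNReal.tsum_mul_right, c, tsum_four_mul_inv_two_pow_sq_mul_two_pow]

lemma measurable_lintegral_weighted (hu : Measurable u) :
    Measurable fun z : Euc k =>
      ∫⁻ y, (ENNReal.ofReal (1 + ‖y‖ ^ 2))⁻¹ * ‖u (join m k y z)‖ₑ ^ 2 := by
  have hw : Measurable fun y : Euc m => ENNReal.ofReal (1 + ‖y‖ ^ 2) := by fun_prop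
  exact ((hw.comp measurable_snd).inv.mul (measurable_enorm_sq_join hu)).lintegral_prod_right'

lemma lintegral_enorm_pairing_sq_le (hu : Measurable u) {φ : Euc m → ℂ} (hφ : Measurable φ)
    (z : Euc k) :
    (∫⁻ y, ‖u (join m k y z) * starRingEnd ℂ (φ y)‖ₑ) ^ 2 ≤
      (∫⁻ y, (ENNReal.ofReal (1 + ‖y‖ ^ 2))⁻¹ * ‖u (join m k y z)‖ₑ ^ 2) *
        ∫⁻ y, ENNReal.ofReal (1 + ‖y‖ ^ 2) * (‖φ y‖₊ : ℝ≥0∞) ^ 2 := by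
  simp only [enorm_mul, RCLike.enorm_conj]
  exact lintegral_mul_sq_le_weighted (measurable_comp_join_left hu z).enorm.aemeasurable
    hφ.enorm.aemeasurable (by fun_prop) (fun _ => (ENNReal.ofReal_pos.2 (by positivity)).ne')
    fun _ => ENNReal.ofReal_ne_top

end Pairing

theorem stmt1_general (m k : ℕ) :
    ∃ C : ℝ, 0 < C ∧
      ∀ (u : Euc (m + k) → ℂ) (φ : Euc m → ℂ), Measurable u → Measurable φ →
        BStarNorm (m + k) u < ⊤ →
        (∫⁻ y : Euc m, ENNReal.ofReal (1 + ‖y‖ ^ 2) * (‖φ y‖₊ : ℝ≥0∞) ^ 2) < ⊤ →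
        (∀ᵐ z : Euc k, Integrable (fun y : Euc m => u (join m k y z) * (starRingEnd ℂ) (φ y))) ∧
          BStarNorm k (fun z => ∫ y : Euc m, u (join m k y z) * (starRingEnd ℂ) (φ y)) ≤
            ENNReal.ofReal C *
              (∫⁻ y : Euc m, ENNReal.ofReal (1 + ‖y‖ ^ 2) * (‖φ y‖₊ : ℝ≥0∞) ^ 2) ^ (1/2 : ℝ) *
              BStarNorm (m + k) u := by
  refine ⟨Real.sqrt 32, by positivity, fun u φ hu hφ hB hM => ⟨?_, ?_⟩⟩
  · have hH := ae_lt_top_of_setLIntegral_ball_two_pow_ne_top (measurable_lintegral_weighted hu)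
      fun j => ((lintegral_ball_lintegral_weighted_le hu j).trans_lt (by finiteness)).ne
    filter_upwards [hH] with z hz
    refine ⟨((measurable_comp_join_left hu z).mul
      (RCLike.continuous_conj.measurable.comp hφ)).aestronglyMeasurable, ?_⟩
    have hsq := (lintegral_enorm_pairing_sq_le hu hφ z).trans_lt (ENNReal.mul_lt_top hz hM)
    exact (ENNReal.pow_lt_top_iff.1 hsq).resolve_right two_ne_zero
  · refine BStarNorm_le_iff.2 fun j => ?_
    calc _ ≤ ∫⁻ z in ball 0 (2 ^ j),
          (∫⁻ y, (ENNReal.ofReal (1 + ‖y‖ ^ 2))⁻¹ * ‖u (join m k y z)‖ₑ ^ 2) *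
            ∫⁻ y, ENNReal.ofReal (1 + ‖y‖ ^ 2) * (‖φ y‖₊ : ℝ≥0∞) ^ 2 :=
          (lintegral_mono_set (AHshell_subset_ball k j)).trans <| lintegral_mono fun z =>
            (pow_le_pow_left' (enorm_integral_le_lintegral_enorm _) 2).trans
              (lintegral_enorm_pairing_sq_le hu hφ z)
      _ ≤ 32 * 2 ^ j * BStarNorm (m + k) u ^ 2 *
            ∫⁻ y, ENNReal.ofReal (1 + ‖y‖ ^ 2) * (‖φ y‖₊ : ℝ≥0∞) ^ 2 := by
          rw [lintegral_mul_const' _ _ hM.ne]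
          exact mul_le_mul_left (lintegral_ball_lintegral_weighted_le hu j) _
      _ = _ := by
          rw [mul_pow, mul_pow, ← ENNReal.ofReal_pow (Real.sqrt_nonneg _),
            Real.sq_sqrt (by norm_num), one_div, rpow_inv_two_sq, ENNReal.ofReal_ofNat]
          ring

/-- pairing a `B*` function on `ℝ^{m+k}` with a weighted-`L²`
function of the first group of variables produces a `B*` function of the
remaining variables, with a constant depending only on `m, k`. -/
theorem stmt1 (m k : ℕ) (hm : 1 ≤ m) (hk : 1 ≤ k) :
    ∃ C : ℝ, 0 < C ∧
      ∀ (u : Euc (m + k) → ℂ) (φ : Euc m → ℂ), Measurable u → Measurable φ →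
        BStarNorm (m + k) u < ⊤ →
        (∫⁻ y : Euc m, ENNReal.ofReal (1 + ‖y‖ ^ 2) * (‖φ y‖₊ : ℝ≥0∞) ^ 2) < ⊤ →
        (∀ᵐ z : Euc k, Integrable (fun y : Euc m => u (join m k y z) * (starRingEnd ℂ) (φ y))) ∧
          BStarNorm k (fun z => ∫ y : Euc m, u (join m k y z) * (starRingEnd ℂ) (φ y)) ≤
            ENNReal.ofReal C *
              (∫⁻ y : Euc m, ENNReal.ofReal (1 + ‖y‖ ^ 2) * (‖φ y‖₊ : ℝ≥0∞) ^ 2) ^ (1/2 : ℝ) *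
              BStarNorm (m + k) u :=
  stmt1_general m k
end
end

section
/- Let n ∈ ℕ, μ ∈ (0,1], let V be a potential of long-range order μ on ℝ^n, let Y be an eikonal phase for V, and set K(x,λ) := √λ |x| − Y(x,λ). Suppose x_+(ξ,t), λ_+(ξ,t) ∈ C^∞((ℝ^n∖{0}) × (0,∞)) and x_−(ξ,t), λ_−(ξ,t) ∈ C^∞((ℝ^n∖{0}) × (−∞,0)) with λ_± > 0 are such that for every compact A ⊂ ℝ^n∖{0} there exist T, C > 0 with, for all ξ ∈ A and ±t > T: ξ = ±∇_x K(x_±, λ_±), t = ±∂_λ K(x_±, λ_±), |x_± − 2ξt| ≤ C(1+|t|)^{1-μ}, and |λ_± − |ξ|²| ≤ C(1+|t|)^{-μ} (arguments (ξ,t) suppressed). Define S_±(ξ,t) := x_±(ξ,t)·ξ + λ_±(ξ,t) t ∓ K(x_±(ξ,t), λ_±(ξ,t)). Then for every compact A ⊂ ℝ^n∖{0} there exists T > 0 such that for all ξ ∈ A and ±t > T: ∇_ξ S_±(ξ,t) = x_±(ξ,t), ∂_t S_±(ξ,t) = λ_±(ξ,t), and S_± solves the Hamilton–Jacobi equation ∂_t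 S_±(ξ,t) = |ξ|² + V(∇_ξ S_±(ξ,t)). -/
open MeasureTheory Metric Filter
open scoped ENNReal RealInnerProductSpace Topology

noncomputable section

/-- A potential of long-range order `μ` on `ℝ^n`: smooth, with
`‖∂^γ V(x)‖ ≤ C (1+|x|)^{-μ-|γ|}` for every order of derivative. -/
def IsLongRangePotential (n : ℕ) (μ : ℝ) (V : Euc n → ℝ) : Prop :=
  ContDiff ℝ (⊤ : ℕ∞) V ∧
    ∀ i : ℕ, ∃ C > 0, ∀ x : Euc n, ‖iteratedFDeriv ℝ i V x‖ ≤ C * (1 + ‖x‖) ^ (-μ - (i : ℝ))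

/-- An eikonal phase `Y` for a long-range potential `V` of order `μ`:
smooth on `ℝ^n × (0,∞)`, solving `2√λ ∂_r Y = |∇_x Y|² + V` for `|x|` large
(locally uniformly in `λ`), with symbol-type bounds
`|∂_x^α ∂_λ^k Y| ≤ C (1+|x|)^{1-|α|-μ}`. -/
def IsEikonalPhase (n : ℕ) (μ : ℝ) (V : Euc n → ℝ) (Y : Euc n → ℝ → ℝ) : Prop :=
  ContDiffOn ℝ (⊤ : ℕ∞) (fun p : Euc n × ℝ => Y p.1 p.2) (Set.univ ×ˢ Set.Ioi 0) ∧
  (∀ Λ : Set ℝ, IsCompact Λ → Λ ⊆ Set.Ioi 0 → ∃ R₀ > 0, ∀ x : Euc n, ∀ lam ∈ Λ, R₀ < ‖x‖ →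
      2 * Real.sqrt lam * (⟪x, gradient (fun y => Y y lam) x⟫ / ‖x‖)
        = ‖gradient (fun y => Y y lam) x‖ ^ 2 + V x) ∧
  (∀ (a k : ℕ) (Λ : Set ℝ), IsCompact Λ → Λ ⊆ Set.Ioi 0 → ∃ C > 0,
      ∀ x : Euc n, ∀ lam ∈ Λ,
      ‖iteratedFDeriv ℝ a (fun y => iteratedDerivWithin k (fun l => Y y l) (Set.Ioi 0) lam) x‖
        ≤ C * (1 + ‖x‖) ^ (1 - (a : ℝ) - μ))

/-- `K(x,λ) = √λ |x| − Y(x,λ)`. -/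
def Kfun (n : ℕ) (Y : Euc n → ℝ → ℝ) (lam : ℝ) (x : Euc n) : ℝ :=
  Real.sqrt lam * ‖x‖ - Y x lam

/-- The Legendre transform `S_+(ξ,t) = x_+·ξ + λ_+ t − K(x_+, λ_+)`. -/
def SPlus (n : ℕ) (Y : Euc n → ℝ → ℝ) (xp : Euc n → ℝ → Euc n) (lamp : Euc n → ℝ → ℝ)
    (ξ : Euc n) (t : ℝ) : ℝ :=
  ⟪xp ξ t, ξ⟫ + lamp ξ t * t - Kfun n Y (lamp ξ t) (xp ξ t)

/-- The Legendre transform `S_−(ξ,t) = x_−·ξ + λ_− t + K(x_−, λ_−)`. -/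
def SMinus (n : ℕ) (Y : Euc n → ℝ → ℝ) (xm : Euc n → ℝ → Euc n) (lamm : Euc n → ℝ → ℝ)
    (ξ : Euc n) (t : ℝ) : ℝ :=
  ⟪xm ξ t, ξ⟫ + lamm ξ t * t + Kfun n Y (lamm ξ t) (xm ξ t)

/-!
Envelope argument. At a point where `ξ = ∇ₓK(x, λ)` and `t = ∂_λK(x, λ)`, the full differential
of `K` is `(v, s) ↦ ⟪ξ, v⟫ + s t`, so in the chain rule for `S = ⟪x, ξ⟫ + λ t - K(x, λ)` every
term involving a derivative of `x` or `λ` cancels: `∇_ξ S = x` and `∂_t S = λ`. The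
Hamilton–Jacobi equation is then the eikonal equation `‖∇ₓK‖² + V(x) = λ`, valid for `|x|`
large and `λ` in a compact subset of `(0, ∞)`. The asymptotics `x ≈ 2tξ`, `λ ≈ |ξ|²` put
`(x_±, λ_±)` in that region once `|t|` is large, uniformly for `ξ` in a compact set avoiding `0`.
`S_-` is treated as the same transform of `-K`.
-/

lemma differentiableAt_curry {𝕜 E F G : Type*} [NontriviallyNormedField 𝕜]
    [NormedAddCommGroup E] [NormedSpace 𝕜 E] [NormedAddCommGroup F] [NormedSpace 𝕜 F]
    [NormedAddCommGroup G] [NormedSpace 𝕜 G] {g : E → F → G} {a : E} {b : F}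
    (hg : DifferentiableAt 𝕜 (fun p : E × F => g p.1 p.2) (a, b)) :
    DifferentiableAt 𝕜 (g · b) a ∧ DifferentiableAt 𝕜 (g a ·) b :=
  ⟨hg.comp (f := fun x => (x, b)) a (differentiableAt_id.prodMk (differentiableAt_const _)),
    hg.comp (f := fun y => (a, y)) b ((differentiableAt_const _).prodMk differentiableAt_id)⟩

section Legendre

variable {E : Type*} [NormedAddCommGroup E] [InnerProductSpace ℝ E] [CompleteSpace E]

lemma gradient_fun_neg (f : E → ℝ) (x : E) : gradient (fun y => -f y) x = -gradient f x := by
  simp only [gradient, fderiv_fun_neg, map_neg]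

lemma hasGradientAt_norm {x : E} (hx : x ≠ 0) : HasGradientAt (‖·‖) (‖x‖⁻¹ • x) x := by
  have hsq : ‖x‖ ^ 2 ≠ 0 := by positivity
  have h := (Real.hasDerivAt_sqrt hsq).comp_hasFDerivAt x
    (hasStrictFDerivAt_norm_sq x).hasFDerivAt
  simp only [Function.comp_def, Real.sqrt_sq (norm_nonneg _)] at h
  rw [hasGradientAt_iff_hasFDerivAt]
  refine h.congr_fderiv ?_
  ext v
  simp only [one_div, mul_inv_rev, smul_apply, coe_innerSL_apply, nsmul_eq_mul, Nat.cast_ofNat,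
    smul_eq_mul, map_smul, InnerProductSpace.toDual_apply_apply]
  field_simp

lemma fderiv_apply_prodMk_of_gradient_of_deriv {f : E × ℝ → ℝ} {x₀ ξ₀ : E} {l₀ t₀ : ℝ}
    (hf : DifferentiableAt ℝ f (x₀, l₀))
    (hξ : ξ₀ = gradient (fun y => f (y, l₀)) x₀) (ht : t₀ = deriv (fun l => f (x₀, l)) l₀)
    (v : E) (s : ℝ) : fderiv ℝ f (x₀, l₀) (v, s) = ⟪ξ₀, v⟫ + s * t₀ := by
  have hx : HasFDerivAt (fun y => f (y, l₀)) _ x₀ :=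
    hf.hasFDerivAt.comp x₀ (hasFDerivAt_prodMk_left (𝕜 := ℝ) x₀ l₀)
  have hl : HasFDerivAt (fun l => f (x₀, l)) _ l₀ :=
    hf.hasFDerivAt.comp l₀ (hasFDerivAt_prodMk_right (𝕜 := ℝ) x₀ l₀)
  have hsplit : ((v, s) : E × ℝ) = (v, 0) + s • (0, 1) := by simp
  rw [hξ, ht, inner_gradient_left, hx.fderiv, hl.hasDerivAt.deriv, hsplit, map_add, map_smul]
  simp

lemma hasGradientAt_legendre {f : E × ℝ → ℝ} {x : E → E} {lam : E → ℝ} {ξ₀ : E} {t₀ : ℝ}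
    (hf : DifferentiableAt ℝ f (x ξ₀, lam ξ₀))
    (hx : DifferentiableAt ℝ x ξ₀) (hl : DifferentiableAt ℝ lam ξ₀)
    (hξ : ξ₀ = gradient (fun y => f (y, lam ξ₀)) (x ξ₀))
    (ht : t₀ = deriv (fun l => f (x ξ₀, l)) (lam ξ₀)) :
    HasGradientAt (fun ζ => ⟪x ζ, ζ⟫ + lam ζ * t₀ - f (x ζ, lam ζ)) (x ξ₀) ξ₀ := by
  have h := ((hx.hasFDerivAt.inner ℝ (hasFDerivAt_id ξ₀)).add
    (hl.hasFDerivAt.mul_const t₀)).sub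
    (hf.hasFDerivAt.comp ξ₀ (hx.hasFDerivAt.prodMk hl.hasFDerivAt))
  rw [hasGradientAt_iff_hasFDerivAt]
  refine h.congr_fderiv (ContinuousLinearMap.ext fun u => ?_)
  simp only [sub_apply, add_apply, ContinuousLinearMap.comp_apply, ContinuousLinearMap.prod_apply,
    ContinuousLinearMap.id_apply, id_eq, fderivInnerCLM_apply, smul_apply, smul_eq_mul,
    InnerProductSpace.toDual_apply_apply, fderiv_apply_prodMk_of_gradient_of_deriv hf hξ ht,
    real_inner_comm ξ₀]
  ring

lemma hasDerivAt_legendre {f : E × ℝ → ℝ} {x : ℝ → E} {lam : ℝ → ℝ} {ξ₀ : E} {t₀ : ℝ}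
    (hf : DifferentiableAt ℝ f (x t₀, lam t₀))
    (hx : DifferentiableAt ℝ x t₀) (hl : DifferentiableAt ℝ lam t₀)
    (hξ : ξ₀ = gradient (fun y => f (y, lam t₀)) (x t₀))
    (ht : t₀ = deriv (fun l => f (x t₀, l)) (lam t₀)) :
    HasDerivAt (fun s => ⟪x s, ξ₀⟫ + lam s * s - f (x s, lam s)) (lam t₀) t₀ := by
  have h := ((hx.hasDerivAt.inner ℝ (hasDerivAt_const t₀ ξ₀)).add
    (hl.hasDerivAt.mul (hasDerivAt_id t₀))).sub
    (hf.hasFDerivAt.comp_hasDerivAt t₀ (hx.hasDerivAt.prodMk hl.hasDerivAt))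
  refine h.congr_deriv ?_
  simp [fderiv_apply_prodMk_of_gradient_of_deriv hf hξ ht, real_inner_comm ξ₀]

theorem hamiltonJacobi_of_legendre {f : E × ℝ → ℝ} {V : E → ℝ} {x : E → ℝ → E}
    {lam S : E → ℝ → ℝ} {ξ₀ : E} {t₀ : ℝ}
    (hS : ∀ ζ s, S ζ s = ⟪x ζ s, ζ⟫ + lam ζ s * s - f (x ζ s, lam ζ s))
    (hf : DifferentiableAt ℝ f (x ξ₀ t₀, lam ξ₀ t₀))
    (hx : DifferentiableAt ℝ (fun p : E × ℝ => x p.1 p.2) (ξ₀, t₀))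
    (hl : DifferentiableAt ℝ (fun p : E × ℝ => lam p.1 p.2) (ξ₀, t₀))
    (hξ : ξ₀ = gradient (fun y => f (y, lam ξ₀ t₀)) (x ξ₀ t₀))
    (ht : t₀ = deriv (fun l => f (x ξ₀ t₀, l)) (lam ξ₀ t₀))
    (heik : ‖gradient (fun y => f (y, lam ξ₀ t₀)) (x ξ₀ t₀)‖ ^ 2 + V (x ξ₀ t₀) = lam ξ₀ t₀) :
    gradient (fun ζ => S ζ t₀) ξ₀ = x ξ₀ t₀ ∧ deriv (fun s => S ξ₀ s) t₀ = lam ξ₀ t₀ ∧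
      deriv (fun s => S ξ₀ s) t₀ = ‖ξ₀‖ ^ 2 + V (gradient (fun ζ => S ζ t₀) ξ₀) := by
  obtain rfl : S = _ := funext₂ hS
  have hgrad := (hasGradientAt_legendre (x := (x · t₀)) (lam := (lam · t₀)) hf
    (differentiableAt_curry hx).1 (differentiableAt_curry hl).1 hξ ht).gradient
  have hderiv := (hasDerivAt_legendre (x := (x ξ₀ ·)) (lam := (lam ξ₀ ·)) hf
    (differentiableAt_curry hx).2 (differentiableAt_curry hl).2 hξ ht).deriv
  refine ⟨hgrad, hderiv, ?_⟩
  rw [hgrad, hderiv, ← heik, ← hξ]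

end Legendre

section Eikonal

variable {n : ℕ} {Y : Euc n → ℝ → ℝ}

lemma differentiableAt_kfun
    (hY : ContDiffOn ℝ (⊤ : ℕ∞) (fun p : Euc n × ℝ => Y p.1 p.2) (Set.univ ×ˢ Set.Ioi 0))
    {x : Euc n} {l : ℝ} (hx : x ≠ 0) (hl : 0 < l) :
    DifferentiableAt ℝ (fun p : Euc n × ℝ => Kfun n Y p.2 p.1) (x, l) :=
  ((differentiableAt_snd.sqrt hl.ne').mul (differentiableAt_fst.norm ℝ hx)).sub
    ((hY.differentiableOn (by simp)).differentiableAt (prod_mem_nhds univ_mem (Ioi_mem_nhds hl)))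

lemma hasGradientAt_kfun
    (hY : ContDiffOn ℝ (⊤ : ℕ∞) (fun p : Euc n × ℝ => Y p.1 p.2) (Set.univ ×ˢ Set.Ioi 0))
    {x : Euc n} {l : ℝ} (hx : x ≠ 0) (hl : 0 < l) :
    HasGradientAt (Kfun n Y l) (Real.sqrt l • (‖x‖⁻¹ • x) - gradient (Y · l) x) x := by
  have hYl : DifferentiableAt ℝ (Y · l) x :=
    (differentiableAt_curry ((hY.differentiableOn (by simp)).differentiableAt
      (prod_mem_nhds univ_mem (Ioi_mem_nhds hl)))).1
  rw [hasGradientAt_iff_hasFDerivAt, map_sub, map_smul]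
  exact ((hasGradientAt_iff_hasFDerivAt.mp (hasGradientAt_norm hx)).const_mul (Real.sqrt l)).sub
    hYl.hasGradientAt

theorem IsEikonalPhase.exists_norm_gradient_kfun_sq_add_eq {μ : ℝ} {V : Euc n → ℝ}
    (hY : IsEikonalPhase n μ V Y) {Λ : Set ℝ} (hΛc : IsCompact Λ) (hΛ : Λ ⊆ Set.Ioi 0) :
    ∃ R > 0, ∀ x : Euc n, ∀ l ∈ Λ, R < ‖x‖ → ‖gradient (Kfun n Y l) x‖ ^ 2 + V x = l := by
  obtain ⟨R, hR, hYeik⟩ := hY.2.1 Λ hΛc hΛ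
  refine ⟨R, hR, fun x l hl hxR => ?_⟩
  have hx : 0 < ‖x‖ := hR.trans hxR
  have hl0 : 0 < l := hΛ hl
  have hradial := hYeik x l hl hxR
  rw [div_eq_inv_mul] at hradial
  rw [(hasGradientAt_kfun hY.1 (norm_pos_iff.1 hx) hl0).gradient, norm_sub_sq_real,
    real_inner_smul_left, real_inner_smul_left, norm_smul, norm_smul, norm_inv, norm_norm,
    inv_mul_cancel₀ hx.ne', mul_one, Real.norm_of_nonneg (Real.sqrt_nonneg l),
    Real.sq_sqrt hl0.le]
  linarith

theorem hamiltonJacobi_sPlus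
    (hY : ContDiffOn ℝ (⊤ : ℕ∞) (fun p : Euc n × ℝ => Y p.1 p.2) (Set.univ ×ˢ Set.Ioi 0))
    {V : Euc n → ℝ} {xp : Euc n → ℝ → Euc n} {lamp : Euc n → ℝ → ℝ} {ξ : Euc n} {t : ℝ}
    (hx : DifferentiableAt ℝ (fun p : Euc n × ℝ => xp p.1 p.2) (ξ, t))
    (hl : DifferentiableAt ℝ (fun p : Euc n × ℝ => lamp p.1 p.2) (ξ, t))
    (hx0 : xp ξ t ≠ 0) (hl0 : 0 < lamp ξ t)
    (hξ : ξ = gradient (fun y => Kfun n Y (lamp ξ t) y) (xp ξ t))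
    (ht : t = deriv (fun l => Kfun n Y l (xp ξ t)) (lamp ξ t))
    (heik : ‖gradient (Kfun n Y (lamp ξ t)) (xp ξ t)‖ ^ 2 + V (xp ξ t) = lamp ξ t) :
    gradient (fun ζ => SPlus n Y xp lamp ζ t) ξ = xp ξ t ∧
      deriv (fun s => SPlus n Y xp lamp ξ s) t = lamp ξ t ∧
      deriv (fun s => SPlus n Y xp lamp ξ s) t =
        ‖ξ‖ ^ 2 + V (gradient (fun ζ => SPlus n Y xp lamp ζ t) ξ) :=
  hamiltonJacobi_of_legendre (f := fun p => Kfun n Y p.2 p.1) (fun _ _ => rfl)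
    (differentiableAt_kfun hY hx0 hl0) hx hl hξ ht heik

theorem hamiltonJacobi_sMinus
    (hY : ContDiffOn ℝ (⊤ : ℕ∞) (fun p : Euc n × ℝ => Y p.1 p.2) (Set.univ ×ˢ Set.Ioi 0))
    {V : Euc n → ℝ} {xm : Euc n → ℝ → Euc n} {lamm : Euc n → ℝ → ℝ} {ξ : Euc n} {t : ℝ}
    (hx : DifferentiableAt ℝ (fun p : Euc n × ℝ => xm p.1 p.2) (ξ, t))
    (hl : DifferentiableAt ℝ (fun p : Euc n × ℝ => lamm p.1 p.2) (ξ, t))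
    (hx0 : xm ξ t ≠ 0) (hl0 : 0 < lamm ξ t)
    (hξ : ξ = -gradient (fun y => Kfun n Y (lamm ξ t) y) (xm ξ t))
    (ht : t = -deriv (fun l => Kfun n Y l (xm ξ t)) (lamm ξ t))
    (heik : ‖gradient (Kfun n Y (lamm ξ t)) (xm ξ t)‖ ^ 2 + V (xm ξ t) = lamm ξ t) :
    gradient (fun ζ => SMinus n Y xm lamm ζ t) ξ = xm ξ t ∧
      deriv (fun s => SMinus n Y xm lamm ξ s) t = lamm ξ t ∧
      deriv (fun s => SMinus n Y xm lamm ξ s) t =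
        ‖ξ‖ ^ 2 + V (gradient (fun ζ => SMinus n Y xm lamm ζ t) ξ) :=
  hamiltonJacobi_of_legendre (f := fun p => -Kfun n Y p.2 p.1)
    (fun _ _ => by rw [SMinus, sub_neg_eq_add]) (differentiableAt_kfun hY hx0 hl0).neg hx hl
    (by rw [gradient_fun_neg, ← hξ]) (by rw [deriv.fun_neg, ← ht])
    (by rwa [gradient_fun_neg, norm_neg])

end Eikonal

section LargeTime

variable {μ : ℝ}

lemma tendsto_const_mul_one_add_rpow_neg (C : ℝ) (hμ : 0 < μ) :
    Tendsto (fun s : ℝ => C * (1 + s) ^ (-μ)) atTop (𝓝 0) := by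
  simpa using ((tendsto_rpow_neg_atTop hμ).comp
    (tendsto_atTop_add_const_left atTop 1 tendsto_id)).const_mul C

lemma tendsto_mul_sub_const_mul_one_add_rpow {a : ℝ} (C : ℝ) (ha : 0 < a) (hμ : 0 < μ) :
    Tendsto (fun s : ℝ => a * s - C * (1 + s) ^ (1 - μ)) atTop atTop := by
  have hlin : Tendsto (fun s : ℝ => 1 + s) atTop atTop :=
    tendsto_atTop_add_const_left atTop 1 tendsto_id
  have hcoef : Tendsto (fun s : ℝ => a - C * (1 + s) ^ (-μ)) atTop (𝓝 a) := by
    simpa using tendsto_const_nhds.sub (tendsto_const_mul_one_add_rpow_neg C hμ)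
  refine tendsto_atTop_add_const_right atTop (-a) (hlin.atTop_mul_pos ha hcoef) |>.congr' ?_
  filter_upwards [eventually_gt_atTop (-1 : ℝ)] with s hs
  rw [sub_eq_add_neg 1 μ, Real.rpow_add (by linarith), Real.rpow_one]
  ring

lemma exists_large_time_bounds {C ε a : ℝ} (R : ℝ) (hμ : 0 < μ) (hC : 0 ≤ C) (hε : 0 < ε)
    (ha : 0 < a) : ∃ T, ∀ s, T ≤ s →
      C * (1 + s) ^ (-μ) < ε ∧ C * (1 + s) ^ (-μ) ≤ C ∧ R < a * s - C * (1 + s) ^ (1 - μ) := by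
  refine eventually_atTop.mp ?_
  filter_upwards [(tendsto_const_mul_one_add_rpow_neg C hμ).eventually_lt_const hε,
    (tendsto_mul_sub_const_mul_one_add_rpow C ha hμ).eventually_gt_atTop R,
    eventually_ge_atTop 0] with s hsmall hlarge hs
  exact ⟨hsmall, mul_le_of_le_one_right hC
    (Real.rpow_le_one_of_one_le_of_nonpos (by linarith) (by linarith)), hlarge⟩

end LargeTime

lemma mem_Icc_and_lt_norm_of_asymptotics {E : Type*} [NormedAddCommGroup E] [NormedSpace ℝ E]
    {x ξ : E} {l t m M C R δ ε : ℝ} (hm : 0 ≤ m) (hmξ : m ≤ ‖ξ‖) (hξM : ‖ξ‖ ≤ M)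
    (hδ : δ < m ^ 2 / 2) (hδC : δ ≤ C) (hR : R < 2 * m * |t| - ε)
    (hx : ‖x - (2 * t) • ξ‖ ≤ ε) (hl : |l - ‖ξ‖ ^ 2| ≤ δ) :
    l ∈ Set.Icc (m ^ 2 / 2) (M ^ 2 + C) ∧ R < ‖x‖ := by
  have hsq_lo : m ^ 2 ≤ ‖ξ‖ ^ 2 := pow_le_pow_left₀ hm hmξ 2
  have hsq_hi : ‖ξ‖ ^ 2 ≤ M ^ 2 := pow_le_pow_left₀ (norm_nonneg ξ) hξM 2
  obtain ⟨hl_lo, hl_hi⟩ := abs_le.mp hl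
  refine ⟨⟨by linarith, by linarith⟩, ?_⟩
  calc R < 2 * m * |t| - ε := hR
    _ ≤ ‖(2 * t) • ξ‖ - ‖x - (2 * t) • ξ‖ := by
      rw [norm_smul, Real.norm_eq_abs, abs_mul, abs_two]
      nlinarith [abs_nonneg t]
    _ ≤ ‖x‖ := by linarith [norm_sub_norm_le ((2 * t) • ξ) x, norm_sub_rev x ((2 * t) • ξ)]

theorem IsEikonalPhase.exists_eikonal_kfun_of_asymptotics {n : ℕ} {μ : ℝ} {V : Euc n → ℝ}
    {Y : Euc n → ℝ → ℝ} (hY : IsEikonalPhase n μ V Y) (hμ : 0 < μ) {A : Set (Euc n)}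
    (hAc : IsCompact A) (hA : A ⊆ {ξ : Euc n | ξ ≠ 0}) {C : ℝ} (hC : 0 ≤ C) :
    ∃ T, ∀ ξ ∈ A, ∀ (x : Euc n) (l t : ℝ), T ≤ |t| →
      ‖x - (2 * t) • ξ‖ ≤ C * (1 + |t|) ^ (1 - μ) → |l - ‖ξ‖ ^ 2| ≤ C * (1 + |t|) ^ (-μ) →
      x ≠ 0 ∧ ‖gradient (Kfun n Y l) x‖ ^ 2 + V x = l := by
  obtain ⟨m, hm, hmA⟩ := hAc.exists_forall_le' continuous_norm.continuousOn
    (fun ξ hξ => norm_pos_iff.2 (hA hξ))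
  obtain ⟨M, hMA⟩ := hAc.isBounded.exists_norm_le
  have hΛ : Set.Icc (m ^ 2 / 2) (M ^ 2 + C) ⊆ Set.Ioi 0 :=
    fun l hl => (by positivity : 0 < m ^ 2 / 2).trans_le hl.1
  obtain ⟨R, hR, hEik⟩ := hY.exists_norm_gradient_kfun_sq_add_eq isCompact_Icc hΛ
  obtain ⟨T, hT⟩ := exists_large_time_bounds R hμ hC
    (by positivity : 0 < m ^ 2 / 2) (by positivity : 0 < 2 * m)
  refine ⟨T, fun ξ hξ x l t ht hx hl => ?_⟩
  obtain ⟨hδ, hδC, hRt⟩ := hT |t| ht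
  obtain ⟨hlΛ, hxR⟩ :=
    mem_Icc_and_lt_norm_of_asymptotics hm.le (hmA ξ hξ) (hMA ξ hξ) hδ hδC hRt hx hl
  exact ⟨norm_pos_iff.1 (hR.trans hxR), hEik x l hlΛ hxR⟩

theorem stmt5_general (n : ℕ) (μ : ℝ) (hμ0 : 0 < μ)
    (V : Euc n → ℝ)
    (Y : Euc n → ℝ → ℝ) (hY : IsEikonalPhase n μ V Y)
    (xp : Euc n → ℝ → Euc n) (lamp : Euc n → ℝ → ℝ)
    (xm : Euc n → ℝ → Euc n) (lamm : Euc n → ℝ → ℝ)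
    (hxp : ContDiffOn ℝ (⊤ : ℕ∞) (fun p : Euc n × ℝ => xp p.1 p.2)
      ({ξ : Euc n | ξ ≠ 0} ×ˢ Set.Ioi 0))
    (hlamp : ContDiffOn ℝ (⊤ : ℕ∞) (fun p : Euc n × ℝ => lamp p.1 p.2)
      ({ξ : Euc n | ξ ≠ 0} ×ˢ Set.Ioi 0))
    (hxm : ContDiffOn ℝ (⊤ : ℕ∞) (fun p : Euc n × ℝ => xm p.1 p.2)
      ({ξ : Euc n | ξ ≠ 0} ×ˢ Set.Iio 0))
    (hlamm : ContDiffOn ℝ (⊤ : ℕ∞) (fun p : Euc n × ℝ => lamm p.1 p.2)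
      ({ξ : Euc n | ξ ≠ 0} ×ˢ Set.Iio 0))
    (hposp : ∀ ξ : Euc n, ξ ≠ 0 → ∀ t : ℝ, 0 < t → 0 < lamp ξ t)
    (hposm : ∀ ξ : Euc n, ξ ≠ 0 → ∀ t : ℝ, t < 0 → 0 < lamm ξ t)
    (hasymp : ∀ A : Set (Euc n), IsCompact A → A ⊆ {ξ : Euc n | ξ ≠ 0} →
      ∃ T > 0, ∃ C > 0, ∀ ξ ∈ A,
        (∀ t : ℝ, T < t →
          ξ = gradient (fun y => Kfun n Y (lamp ξ t) y) (xp ξ t) ∧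
          t = deriv (fun l => Kfun n Y l (xp ξ t)) (lamp ξ t) ∧
          ‖xp ξ t - (2 * t) • ξ‖ ≤ C * (1 + |t|) ^ (1 - μ) ∧
          |lamp ξ t - ‖ξ‖ ^ 2| ≤ C * (1 + |t|) ^ (-μ)) ∧
        (∀ t : ℝ, t < -T →
          ξ = -gradient (fun y => Kfun n Y (lamm ξ t) y) (xm ξ t) ∧
          t = -deriv (fun l => Kfun n Y l (xm ξ t)) (lamm ξ t) ∧
          ‖xm ξ t - (2 * t) • ξ‖ ≤ C * (1 + |t|) ^ (1 - μ) ∧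
          |lamm ξ t - ‖ξ‖ ^ 2| ≤ C * (1 + |t|) ^ (-μ))) :
    ∀ A : Set (Euc n), IsCompact A → A ⊆ {ξ : Euc n | ξ ≠ 0} →
      ∃ T > 0, ∀ ξ ∈ A,
        (∀ t : ℝ, T < t →
          gradient (fun ζ => SPlus n Y xp lamp ζ t) ξ = xp ξ t ∧
          deriv (fun s => SPlus n Y xp lamp ξ s) t = lamp ξ t ∧
          deriv (fun s => SPlus n Y xp lamp ξ s) t =
            ‖ξ‖ ^ 2 + V (gradient (fun ζ => SPlus n Y xp lamp ζ t) ξ)) ∧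
        (∀ t : ℝ, t < -T →
          gradient (fun ζ => SMinus n Y xm lamm ζ t) ξ = xm ξ t ∧
          deriv (fun s => SMinus n Y xm lamm ξ s) t = lamm ξ t ∧
          deriv (fun s => SMinus n Y xm lamm ξ s) t =
            ‖ξ‖ ^ 2 + V (gradient (fun ζ => SMinus n Y xm lamm ζ t) ξ)) := by
  intro A hAc hA
  obtain ⟨T₀, -, C, hC, hAs⟩ := hasymp A hAc hA
  obtain ⟨T₁, hT₁⟩ := hY.exists_eikonal_kfun_of_asymptotics hμ0 hAc hA hC.le
  refine ⟨max T₀ (max T₁ 1), by positivity, fun ξ hξ => ⟨fun t ht => ?_, fun t ht => ?_⟩⟩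
  · obtain ⟨hT₀t, hT₁t, h1t⟩ : T₀ < t ∧ T₁ < t ∧ 1 < t := by simpa using ht
    have ht0 : 0 < t := one_pos.trans h1t
    obtain ⟨hgrad, hderiv, hx, hl⟩ := (hAs ξ hξ).1 t hT₀t
    obtain ⟨hx0, heik⟩ := hT₁ ξ hξ _ _ t (hT₁t.le.trans (le_abs_self t)) hx hl
    have hU := prod_mem_nhds (isOpen_ne.mem_nhds (hA hξ)) (Ioi_mem_nhds ht0)
    exact hamiltonJacobi_sPlus hY.1 ((hxp.differentiableOn (by simp)).differentiableAt hU)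
      ((hlamp.differentiableOn (by simp)).differentiableAt hU) hx0 (hposp ξ (hA hξ) t ht0)
      hgrad hderiv heik
  · obtain ⟨hT₀t, hT₁t, h1t⟩ : T₀ < -t ∧ T₁ < -t ∧ 1 < -t := by simpa using lt_neg.mp ht
    have ht0 : t < 0 := by linarith
    obtain ⟨hgrad, hderiv, hx, hl⟩ := (hAs ξ hξ).2 t (by linarith)
    obtain ⟨hx0, heik⟩ := hT₁ ξ hξ _ _ t (hT₁t.le.trans (neg_le_abs t)) hx hl
    have hU := prod_mem_nhds (isOpen_ne.mem_nhds (hA hξ)) (Iio_mem_nhds ht0)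
    exact hamiltonJacobi_sMinus hY.1 ((hxm.differentiableOn (by simp)).differentiableAt hU)
      ((hlamm.differentiableOn (by simp)).differentiableAt hU) hx0 (hposm ξ (hA hξ) t ht0)
      hgrad hderiv heik

/-- the Legendre transforms `S_±` of the eikonal phase satisfy
`∇_ξ S_± = x_±`, `∂_t S_± = λ_±`, and solve the Hamilton–Jacobi equation
`∂_t S_± = |ξ|² + V(∇_ξ S_±)` for `±t` large, uniformly on compact sets of `ξ ≠ 0`. -/
theorem stmt5 (n : ℕ) (μ : ℝ) (hμ0 : 0 < μ) (hμ1 : μ ≤ 1)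
    (V : Euc n → ℝ) (hV : IsLongRangePotential n μ V)
    (Y : Euc n → ℝ → ℝ) (hY : IsEikonalPhase n μ V Y)
    (xp : Euc n → ℝ → Euc n) (lamp : Euc n → ℝ → ℝ)
    (xm : Euc n → ℝ → Euc n) (lamm : Euc n → ℝ → ℝ)
    (hxp : ContDiffOn ℝ (⊤ : ℕ∞) (fun p : Euc n × ℝ => xp p.1 p.2)
      ({ξ : Euc n | ξ ≠ 0} ×ˢ Set.Ioi 0))
    (hlamp : ContDiffOn ℝ (⊤ : ℕ∞) (fun p : Euc n × ℝ => lamp p.1 p.2)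
      ({ξ : Euc n | ξ ≠ 0} ×ˢ Set.Ioi 0))
    (hxm : ContDiffOn ℝ (⊤ : ℕ∞) (fun p : Euc n × ℝ => xm p.1 p.2)
      ({ξ : Euc n | ξ ≠ 0} ×ˢ Set.Iio 0))
    (hlamm : ContDiffOn ℝ (⊤ : ℕ∞) (fun p : Euc n × ℝ => lamm p.1 p.2)
      ({ξ : Euc n | ξ ≠ 0} ×ˢ Set.Iio 0))
    (hposp : ∀ ξ : Euc n, ξ ≠ 0 → ∀ t : ℝ, 0 < t → 0 < lamp ξ t)
    (hposm : ∀ ξ : Euc n, ξ ≠ 0 → ∀ t : ℝ, t < 0 → 0 < lamm ξ t)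
    (hasymp : ∀ A : Set (Euc n), IsCompact A → A ⊆ {ξ : Euc n | ξ ≠ 0} →
      ∃ T > 0, ∃ C > 0, ∀ ξ ∈ A,
        (∀ t : ℝ, T < t →
          ξ = gradient (fun y => Kfun n Y (lamp ξ t) y) (xp ξ t) ∧
          t = deriv (fun l => Kfun n Y l (xp ξ t)) (lamp ξ t) ∧
          ‖xp ξ t - (2 * t) • ξ‖ ≤ C * (1 + |t|) ^ (1 - μ) ∧
          |lamp ξ t - ‖ξ‖ ^ 2| ≤ C * (1 + |t|) ^ (-μ)) ∧
        (∀ t : ℝ, t < -T →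
          ξ = -gradient (fun y => Kfun n Y (lamm ξ t) y) (xm ξ t) ∧
          t = -deriv (fun l => Kfun n Y l (xm ξ t)) (lamm ξ t) ∧
          ‖xm ξ t - (2 * t) • ξ‖ ≤ C * (1 + |t|) ^ (1 - μ) ∧
          |lamm ξ t - ‖ξ‖ ^ 2| ≤ C * (1 + |t|) ^ (-μ))) :
    ∀ A : Set (Euc n), IsCompact A → A ⊆ {ξ : Euc n | ξ ≠ 0} →
      ∃ T > 0, ∀ ξ ∈ A,
        (∀ t : ℝ, T < t →
          gradient (fun ζ => SPlus n Y xp lamp ζ t) ξ = xp ξ t ∧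
          deriv (fun s => SPlus n Y xp lamp ξ s) t = lamp ξ t ∧
          deriv (fun s => SPlus n Y xp lamp ξ s) t =
            ‖ξ‖ ^ 2 + V (gradient (fun ζ => SPlus n Y xp lamp ζ t) ξ)) ∧
        (∀ t : ℝ, t < -T →
          gradient (fun ζ => SMinus n Y xm lamm ζ t) ξ = xm ξ t ∧
          deriv (fun s => SMinus n Y xm lamm ξ s) t = lamm ξ t ∧
          deriv (fun s => SMinus n Y xm lamm ξ s) t =
            ‖ξ‖ ^ 2 + V (gradient (fun ζ => SMinus n Y xm lamm ζ t) ξ)) :=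
  stmt5_general n μ hμ0 V Y hY xp lamp xm lamm hxp hlamp hxm hlamm hposp hposm hasymp
end
end

section
/- Let c ∈ ℝ ∖ {0} and ε ∈ (0,1), and let φ : [1,∞) → ℂ be continuously differentiable with I := ∫_1^∞ r^{-ε} |φ'(r)| dr < ∞. Then there exists C > 0 (depending only on c, ε, |φ(1)| and I) such that | ∫_1^ρ e^{icr} φ(r) dr | ≤ C ρ^ε for all ρ ≥ 1; in particular, ρ^{-1} ∫_1^ρ e^{icr} φ(r) dr → 0 as ρ → ∞. -/
/-!
Integrating by parts against the primitive `e^{icr} / (ic)`, of modulus `1/|c|`, bounds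
`|∫_1^ρ e^{icr} φ|` by `2 (|φ 1| + ∫_1^ρ |φ'|) / |c|`, using `|φ ρ| ≤ |φ 1| + ∫_1^ρ |φ'|` for the
boundary term. As `r^ε ≤ ρ^ε` on `[1, ρ]`, `∫_1^ρ |φ'| ≤ ρ^ε ∫_1^∞ r^{-ε} |φ'|`. The Cesàro mean is
then `O(ρ^{ε-1})`, which tends to `0` since `ε < 1`.
-/

open MeasureTheory Filter Set
open scoped Topology

theorem setIntegral_Ioc_norm_le_rpow_mul {E : Type*} [NormedAddCommGroup E] {f : ℝ → E}
    {a b ε : ℝ} (ha : 0 < a) (hab : a ≤ b) (hε : 0 ≤ ε)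
    (hf : IntegrableOn f (Ioc a b)) (hw : IntegrableOn (fun r ↦ r ^ (-ε) * ‖f r‖) (Ici a)) :
    ∫ r in Ioc a b, ‖f r‖ ≤ b ^ ε * ∫ r in Ici a, r ^ (-ε) * ‖f r‖ := by
  have hIoc : Ioc a b ⊆ Ici a := Ioc_subset_Icc_self.trans Icc_subset_Ici_self
  have hb_weight : ∀ r ∈ Ioc a b, ‖f r‖ ≤ b ^ ε * (r ^ (-ε) * ‖f r‖) := by
    intro r ⟨har, hrb⟩
    have hr : 0 < r := ha.trans har
    calc ‖f r‖ = r ^ ε * (r ^ (-ε) * ‖f r‖) := by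
          rw [← mul_assoc, ← Real.rpow_add hr, add_neg_cancel, Real.rpow_zero, one_mul]
      _ ≤ b ^ ε * (r ^ (-ε) * ‖f r‖) := by gcongr
  have hw_nonneg : 0 ≤ᵐ[volume.restrict (Ici a)] fun r ↦ r ^ (-ε) * ‖f r‖ := by
    filter_upwards [ae_restrict_mem measurableSet_Ici] with r (hr : a ≤ r)
    have : 0 < r := ha.trans_le hr
    positivity
  calc ∫ r in Ioc a b, ‖f r‖
      ≤ ∫ r in Ioc a b, b ^ ε * (r ^ (-ε) * ‖f r‖) :=
        setIntegral_mono_on hf.norm ((hw.mono_set hIoc).const_mul _) measurableSet_Ioc hb_weight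
    _ = b ^ ε * ∫ r in Ioc a b, r ^ (-ε) * ‖f r‖ := integral_const_mul _ _
    _ ≤ b ^ ε * ∫ r in Ici a, r ^ (-ε) * ‖f r‖ :=
        mul_le_mul_of_nonneg_left (setIntegral_mono_set hw hw_nonneg hIoc.eventuallyLE)
          (Real.rpow_nonneg (ha.le.trans hab) ε)

theorem norm_le_norm_add_integral_norm_deriv {E : Type*} [NormedAddCommGroup E]
    [NormedSpace ℝ E] [CompleteSpace E] {f f' : ℝ → E} {a b : ℝ} (hab : a ≤ b)
    (hf : ∀ x ∈ Icc a b, HasDerivWithinAt f (f' x) (Icc a b) x)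
    (hf' : IntervalIntegrable f' volume a b) :
    ‖f b‖ ≤ ‖f a‖ + ∫ r in Ioc a b, ‖f' r‖ := by
  have hftc : ∫ x in a..b, f' x = f b - f a :=
    intervalIntegral.integral_eq_sub_of_hasDerivAt_of_le hab
      (fun x hx ↦ (hf x hx).continuousWithinAt)
      (fun x hx ↦ (hf x (Ioo_subset_Icc_self hx)).hasDerivAt (Icc_mem_nhds hx.1 hx.2)) hf'
  calc ‖f b‖ = ‖f a + ∫ x in a..b, f' x‖ := by rw [hftc, add_sub_cancel]
    _ ≤ ‖f a‖ + ∫ r in Ioc a b, ‖f' r‖ := by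
        grw [norm_add_le, intervalIntegral.integral_of_le hab, norm_integral_le_integral_norm]

theorem hasDerivAt_cexp_I_mul_div {c : ℝ} (hc : c ≠ 0) (x : ℝ) :
    HasDerivAt (fun r : ℝ ↦ Complex.exp (Complex.I * c * r) / (Complex.I * c))
      (Complex.exp (Complex.I * c * x)) x := by
  have hIc : Complex.I * c ≠ 0 := mul_ne_zero Complex.I_ne_zero (Complex.ofReal_ne_zero.2 hc)
  have := (((Complex.ofRealCLM.hasDerivAt (x := x)).const_mul (Complex.I * c)).cexp).div_const
    (Complex.I * c)
  simpa [hIc] using this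

theorem norm_cexp_I_mul_ofReal_mul (c x : ℝ) : ‖Complex.exp (Complex.I * c * x)‖ = 1 := by
  rw [mul_assoc, ← Complex.ofReal_mul, Complex.norm_exp_I_mul_ofReal]

theorem norm_integral_cexp_mul_le {φ φ' : ℝ → ℂ} {a b c : ℝ} (hc : c ≠ 0) (hab : a ≤ b)
    (hφ : ∀ x ∈ Icc a b, HasDerivWithinAt φ (φ' x) (Icc a b) x)
    (hφ' : IntervalIntegrable φ' volume a b) :
    ‖∫ x in a..b, Complex.exp (Complex.I * c * x) * φ x‖ ≤
      2 * (‖φ a‖ + ∫ r in Ioc a b, ‖φ' r‖) / |c| := by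
  set v : ℝ → ℂ := fun r ↦ Complex.exp (Complex.I * c * r) / (Complex.I * c)
  have hv_norm : ∀ r, ‖v r‖ = |c|⁻¹ := fun r ↦ by
    simp [v, norm_cexp_I_mul_ofReal_mul]
  have hparts : ∫ x in a..b, Complex.exp (Complex.I * c * x) * φ x =
      φ b * v b - φ a * v a - ∫ x in a..b, φ' x * v x := by
    have hexp : Continuous fun x : ℝ ↦ Complex.exp (Complex.I * c * x) := by fun_prop
    simp_rw [mul_comm (Complex.exp _)]
    rw [← uIcc_of_le hab] at hφ
    exact intervalIntegral.integral_mul_deriv_eq_deriv_mul_of_hasDerivWithinAt hφ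
      (fun x _ ↦ (hasDerivAt_cexp_I_mul_div hc x).hasDerivWithinAt) hφ'
      (hexp.intervalIntegrable a b)
  have hrem : ‖∫ x in a..b, φ' x * v x‖ ≤ (∫ r in Ioc a b, ‖φ' r‖) * |c|⁻¹ := by
    rw [intervalIntegral.integral_of_le hab, ← integral_mul_const]
    refine (norm_integral_le_integral_norm _).trans_eq ?_
    simp_rw [norm_mul, hv_norm]
  have hφb := norm_le_norm_add_integral_norm_deriv hab hφ hφ'
  rw [hparts, div_eq_mul_inv]
  calc _ ≤ ‖φ b * v b‖ + ‖φ a * v a‖ + ‖∫ x in a..b, φ' x * v x‖ :=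
        norm_sub_le_of_le (norm_sub_le _ _) le_rfl
    _ ≤ (‖φ b‖ + ‖φ a‖ + ∫ r in Ioc a b, ‖φ' r‖) * |c|⁻¹ := by
        rw [norm_mul, norm_mul, hv_norm, hv_norm]; linarith
    _ ≤ _ := by gcongr; linarith

theorem tendsto_ofReal_inv_mul_of_norm_le_rpow {F : ℝ → ℂ} {C ε : ℝ} (hε : ε < 1)
    (hF : ∀ᶠ ρ in atTop, ‖F ρ‖ ≤ C * ρ ^ ε) :
    Tendsto (fun ρ : ℝ ↦ (ρ : ℂ)⁻¹ * F ρ) atTop (𝓝 0) := by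
  have hdecay : Tendsto (fun ρ : ℝ ↦ C * ρ ^ (ε - 1)) atTop (𝓝 0) := by
    simpa using (tendsto_rpow_neg_atTop (by linarith : 0 < 1 - ε)).const_mul C
  refine squeeze_zero_norm' ?_ hdecay
  filter_upwards [hF, eventually_gt_atTop 0] with ρ hFρ hρ
  rw [norm_mul, norm_inv, Complex.norm_real, Real.norm_of_nonneg hρ.le, Real.rpow_sub_one hρ.ne']
  calc _ ≤ ρ⁻¹ * (C * ρ ^ ε) := by gcongr
    _ = _ := by ring

/-- if `φ` is `C¹` on `[1,∞)` with `∫_1^∞ r^{-ε} |φ'(r)| dr < ∞`,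
then `∫_1^ρ e^{icr} φ(r) dr = O(ρ^ε)`; in particular its Cesàro mean tends to `0`. -/
theorem stmt10 (c ε : ℝ) (hc : c ≠ 0) (hε0 : 0 < ε) (hε1 : ε < 1)
    (φ φ' : ℝ → ℂ)
    (hd : ∀ r ∈ Set.Ici (1 : ℝ), HasDerivWithinAt φ (φ' r) (Set.Ici 1) r)
    (hcont : ContinuousOn φ' (Set.Ici 1))
    (hI : IntegrableOn (fun r : ℝ => r ^ (-ε) * ‖φ' r‖) (Set.Ici 1)) :
    (∃ C : ℝ, 0 < C ∧ ∀ ρ : ℝ, 1 ≤ ρ →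
        ‖∫ r in Set.Ioc (1 : ℝ) ρ, Complex.exp (Complex.I * (c : ℂ) * (r : ℂ)) * φ r‖ ≤
          C * ρ ^ ε) ∧
      Tendsto (fun ρ : ℝ => ((ρ : ℂ))⁻¹ *
          ∫ r in Set.Ioc (1 : ℝ) ρ, Complex.exp (Complex.I * (c : ℂ) * (r : ℂ)) * φ r)
        atTop (𝓝 0) := by
  set I := ∫ r in Ici 1, r ^ (-ε) * ‖φ' r‖
  have hI0 : 0 ≤ I := setIntegral_nonneg measurableSet_Ici fun r (hr : 1 ≤ r) ↦
    mul_nonneg (Real.rpow_nonneg (zero_le_one.trans hr) _) (norm_nonneg _)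
  have hbound : ∀ ρ : ℝ, 1 ≤ ρ →
      ‖∫ r in Ioc (1 : ℝ) ρ, Complex.exp (Complex.I * c * r) * φ r‖ ≤
        (2 * (‖φ 1‖ + I) / |c| + 1) * ρ ^ ε := by
    intro ρ hρ
    have hφ' : IntervalIntegrable φ' volume 1 ρ :=
      (hcont.mono (uIcc_of_le hρ ▸ Icc_subset_Ici_self)).intervalIntegrable
    have hJ := setIntegral_Ioc_norm_le_rpow_mul one_pos hρ hε0.le hφ'.1 hI
    have hρε : 1 ≤ ρ ^ ε := Real.one_le_rpow hρ hε0.le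
    rw [← intervalIntegral.integral_of_le hρ]
    calc _ ≤ 2 * (‖φ 1‖ + ∫ r in Ioc 1 ρ, ‖φ' r‖) / |c| :=
          norm_integral_cexp_mul_le hc hρ (fun x hx ↦ (hd x hx.1).mono Icc_subset_Ici_self) hφ'
      _ ≤ 2 * (‖φ 1‖ + I) / |c| * ρ ^ ε := by
          rw [div_mul_eq_mul_div, mul_assoc]
          gcongr
          nlinarith [norm_nonneg (φ 1)]
      _ ≤ _ := by gcongr; linarith
  exact ⟨⟨_, by positivity, hbound⟩,
    tendsto_ofReal_inv_mul_of_norm_le_rpow hε1 ((eventually_ge_atTop 1).mono hbound)⟩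
end

section
/- Let c ∈ ℝ ∖ {0} and ε ∈ (0,1), and let φ : [1,∞) → ℂ be continuously differentiable with ∫_1^∞ |φ'(r) + i c φ(r)| dr < ∞ and ∫_1^∞ r^{-ε} |φ(r)| dr < ∞. Then φ(r) → 0 as r → ∞. -/
/-!
Multiplying by the unimodular factor `e^{icr}` turns `φ' + icφ` into the derivative of
`ψ r = e^{icr} φ r`, so `ψ'` is integrable and `ψ` has a limit `L` at infinity. Then
`‖φ r‖ = ‖ψ r‖ → ‖L‖`, and if `‖L‖ > 0` the integrability of `r^{-ε} ‖φ r‖` would force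
`r^{-ε}` to be integrable near infinity, which fails for `ε ≤ 1`.
-/

open MeasureTheory Filter Set
open scoped Topology

theorem aestronglyMeasurable_of_hasDerivAt_Ioi {E : Type*} [NormedAddCommGroup E]
    [NormedSpace ℝ E] [CompleteSpace E] {f f' : ℝ → E} {a : ℝ}
    (hf : ∀ x ∈ Ioi a, HasDerivAt f (f' x) x) :
    AEStronglyMeasurable f' (volume.restrict (Ioi a)) :=
  (aestronglyMeasurable_deriv f _).congr <|
    ae_restrict_of_forall_mem measurableSet_Ioi fun x hx => (hf x hx).deriv

theorem exists_tendsto_of_hasDerivAt_of_integrableOn_norm {E : Type*} [NormedAddCommGroup E]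
    [NormedSpace ℝ E] [CompleteSpace E] {f f' : ℝ → E} {a : ℝ}
    (hf : ∀ x ∈ Ioi a, HasDerivAt f (f' x) x) (hf' : IntegrableOn (fun x => ‖f' x‖) (Ioi a)) :
    ∃ L, Tendsto f atTop (𝓝 L) :=
  ⟨_, tendsto_limUnder_of_hasDerivAt_of_integrableOn_Ioi hf <|
    (integrable_norm_iff (aestronglyMeasurable_of_hasDerivAt_Ioi hf)).mp hf'⟩

theorem eq_zero_of_tendsto_of_integrableOn_rpow_mul {g : ℝ → ℝ} {a s m : ℝ} (hs : -1 ≤ s)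
    (hg : Tendsto g atTop (𝓝 m)) (hint : IntegrableOn (fun r => r ^ s * g r) (Ioi a)) :
    m = 0 := by
  by_contra hm
  have hm2 : 0 < |m| / 2 := by positivity
  obtain ⟨R, hR⟩ := ((hg.abs.eventually (eventually_ge_nhds (half_lt_self (abs_pos.mpr hm)))).and
    (eventually_ge_atTop (max a 1))).exists_forall_of_atTop
  have haR : a ≤ R := le_of_max_le_left (hR R le_rfl).2
  have hR1 : 1 ≤ R := le_of_max_le_right (hR R le_rfl).2
  have hbound : IntegrableOn (fun r => |m| / 2 * r ^ s) (Ioi R) := by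
    refine Integrable.mono' (hint.mono_set (Ioi_subset_Ioi haR)).norm ?_ ?_
    · refine (continuousOn_const.mul (continuousOn_id.rpow_const fun x hx => Or.inl ?_))
        |>.aestronglyMeasurable measurableSet_Ioi
      exact (zero_lt_one.trans_le (hR1.trans hx.out.le)).ne'
    · filter_upwards [ae_restrict_mem measurableSet_Ioi] with r hr
      have hrs : 0 ≤ r ^ s := Real.rpow_nonneg (by linarith [hr.out]) s
      rw [Real.norm_eq_abs, abs_of_nonneg (by positivity), norm_mul, Real.norm_of_nonneg hrs,
        mul_comm]
      exact mul_le_mul_of_nonneg_left (hR r hr.out.le).1 hrs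
  have hpow : IntegrableOn (fun r : ℝ => r ^ s) (Ioi R) :=
    (integrable_const_mul_iff (IsUnit.mk0 _ hm2.ne') _).mp hbound
  linarith [(integrableOn_Ioi_rpow_iff (by linarith)).mp hpow]

theorem norm_cexp_ofReal_mul_I_mul (c r : ℝ) (z : ℂ) :
    ‖Complex.exp (↑(c * r) * Complex.I) * z‖ = ‖z‖ := by
  rw [norm_mul, Complex.norm_exp_ofReal_mul_I, one_mul]

theorem HasDerivAt.cexp_ofReal_mul_I_mul {φ : ℝ → ℂ} {φ' : ℂ} {r : ℝ} (c : ℝ)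
    (hφ : HasDerivAt φ φ' r) :
    HasDerivAt (fun t => Complex.exp (↑(c * t) * Complex.I) * φ t)
      (Complex.exp (↑(c * r) * Complex.I) * (φ' + Complex.I * c * φ r)) r := by
  have hphase : HasDerivAt (fun t : ℝ => (↑(c * t) : ℂ) * Complex.I) (c * Complex.I) r := by
    simpa using ((hasDerivAt_id r).const_mul c).ofReal_comp.mul_const Complex.I
  exact (hphase.cexp.mul hφ).congr_deriv (by ring)

theorem stmt11_general (c ε : ℝ) (hε1 : ε < 1)
    (φ φ' : ℝ → ℂ)
    (hd : ∀ r ∈ Set.Ici (1 : ℝ), HasDerivWithinAt φ (φ' r) (Set.Ici 1) r)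
    (h1 : IntegrableOn (fun r : ℝ => ‖φ' r + Complex.I * (c : ℂ) * φ r‖) (Set.Ici 1))
    (h2 : IntegrableOn (fun r : ℝ => r ^ (-ε) * ‖φ r‖) (Set.Ici 1)) :
    Tendsto φ atTop (𝓝 0) := by
  have hψ : ∀ r ∈ Ioi (1 : ℝ), HasDerivAt (fun t => Complex.exp (↑(c * t) * Complex.I) * φ t)
      (Complex.exp (↑(c * r) * Complex.I) * (φ' r + Complex.I * c * φ r)) r := fun r hr =>
    ((hd r hr.out.le).hasDerivAt (Ici_mem_nhds hr)).cexp_ofReal_mul_I_mul c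
  obtain ⟨L, hL⟩ := exists_tendsto_of_hasDerivAt_of_integrableOn_norm hψ <| by
    simpa only [norm_cexp_ofReal_mul_I_mul] using h1.mono_set Ioi_subset_Ici_self
  have hnorm : Tendsto (fun r => ‖φ r‖) atTop (𝓝 ‖L‖) := by
    simpa only [norm_cexp_ofReal_mul_I_mul] using hL.norm
  have hL0 : ‖L‖ = 0 := eq_zero_of_tendsto_of_integrableOn_rpow_mul (neg_le_neg hε1.le) hnorm
    (h2.mono_set Ioi_subset_Ici_self)
  rw [tendsto_zero_iff_norm_tendsto_zero]
  rwa [hL0] at hnorm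

/-- if `φ` is `C¹` on `[1,∞)` with `φ' + icφ` integrable and
`r^{-ε} |φ|` integrable on `[1,∞)`, then `φ(r) → 0` as `r → ∞`. -/
theorem stmt11 (c ε : ℝ) (hc : c ≠ 0) (hε0 : 0 < ε) (hε1 : ε < 1)
    (φ φ' : ℝ → ℂ)
    (hd : ∀ r ∈ Set.Ici (1 : ℝ), HasDerivWithinAt φ (φ' r) (Set.Ici 1) r)
    (hcont : ContinuousOn φ' (Set.Ici 1))
    (h1 : IntegrableOn (fun r : ℝ => ‖φ' r + Complex.I * (c : ℂ) * φ r‖) (Set.Ici 1))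
    (h2 : IntegrableOn (fun r : ℝ => r ^ (-ε) * ‖φ r‖) (Set.Ici 1)) :
    Tendsto φ atTop (𝓝 0) :=
  stmt11_general c ε hε1 φ φ' hd h1 h2
end
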